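/- Let n ∈ ℕ, L, Δ > 0, set λ = 2L + Δ and δ = 2Δ/(2L + Δ). Let t₁ ∈ ℝ, T ∈ (t₁, ∞], and let X̃ : [t₁, T) → ℝⁿ be differentiable with X̃(t₁) = 0 and ‖X̃′(t)‖ ≤ L‖X̃(t)‖ + Δ for all t ∈ [t₁, T). Then for all t ∈ [t₁, T), ‖X̃(t)‖ ≤ √( δ ( e^{λ(t−t₁)} − 1 ) ). -/

import Mathlib

/-! The squared norm `g = ‖X̃‖²` satisfies `|g'| = 2|⟪X̃, X̃'⟫| ≤ 2L‖X̃‖² + 2Δ‖X̃‖ ≤ (2L + Δ) g + Δ`,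
using `2‖X̃‖ ≤ ‖X̃‖² + 1`. Grönwall's inequality for this scalar linear bound, started from
`g(t₁) = 0`, gives `g(t) ≤ Δ/(2L + Δ) · (e^{(2L+Δ)(t−t₁)} − 1)`, which is half the claimed
envelope. -/

open Real Set

open scoped RealInnerProductSpace

section NormSq

variable {E : Type*} [NormedAddCommGroup E] [InnerProductSpace ℝ E]

theorem abs_two_mul_inner_le_of_norm_le {x v : E} {L Δ : ℝ} (hΔ : 0 ≤ Δ)
    (hv : ‖v‖ ≤ L * ‖x‖ + Δ) :
    |2 * ⟪x, v⟫| ≤ (2 * L + Δ) * ‖x‖ ^ 2 + Δ := by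
  have hcs : |⟪x, v⟫| ≤ ‖x‖ * ‖v‖ := abs_real_inner_le_norm x v
  have hxv : ‖x‖ * ‖v‖ ≤ ‖x‖ * (L * ‖x‖ + Δ) := mul_le_mul_of_nonneg_left hv (norm_nonneg x)
  have hamgm : 2 * ‖x‖ ≤ ‖x‖ ^ 2 + 1 := by nlinarith [sq_nonneg (‖x‖ - 1)]
  rw [abs_mul, abs_two]
  nlinarith

theorem norm_sq_le_gronwallBound_of_norm_deriv_right_le {X X' : ℝ → E} {L Δ a b : ℝ}
    (hΔ : 0 ≤ Δ) (hX : ContinuousOn X (Icc a b))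
    (hX' : ∀ t ∈ Ico a b, HasDerivWithinAt X (X' t) (Ici t) t) (ha : X a = 0)
    (bound : ∀ t ∈ Ico a b, ‖X' t‖ ≤ L * ‖X t‖ + Δ) :
    ∀ t ∈ Icc a b, ‖X t‖ ^ 2 ≤ gronwallBound 0 (2 * L + Δ) Δ (t - a) := by
  intro t ht
  have hg := norm_le_gronwallBound_of_norm_deriv_right_le (f := (‖X ·‖ ^ 2)) (δ := 0)
    ((continuous_norm.comp_continuousOn hX).pow 2) (fun s hs => (hX' s hs).norm_sq)
    (by simp [ha]) (fun s hs => by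
      simpa only [Real.norm_eq_abs, abs_sq] using
        abs_two_mul_inner_le_of_norm_le hΔ (bound s hs)) t ht
  simpa only [Real.norm_eq_abs, abs_sq] using hg

end NormSq

theorem stmt_12_general (n : ℕ) (L Δ : ℝ) (hL : 0 < L) (hΔ : 0 < Δ)
    (t₁ : ℝ) (T : EReal)
    (X X' : ℝ → EuclideanSpace ℝ (Fin n))
    (hinit : X t₁ = 0)
    (hderiv : ∀ t : ℝ, t₁ ≤ t → (t : EReal) < T → HasDerivAt X (X' t) t)
    (hbound : ∀ t : ℝ, t₁ ≤ t → (t : EReal) < T → ‖X' t‖ ≤ L * ‖X t‖ + Δ) :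
    ∀ t : ℝ, t₁ ≤ t → (t : EReal) < T →
      ‖X t‖ ≤ Real.sqrt ((2 * Δ / (2 * L + Δ)) *
        (Real.exp ((2 * L + Δ) * (t - t₁)) - 1)) := by
  intro t ht₁ htT
  have hlt : ∀ s ∈ Icc t₁ t, (s : EReal) < T := fun s hs =>
    lt_of_le_of_lt (EReal.coe_le_coe_iff.mpr hs.2) htT
  have hK : 0 < 2 * L + Δ := by positivity
  have hexp : 0 ≤ exp ((2 * L + Δ) * (t - t₁)) - 1 := by
    linarith [one_le_exp (mul_nonneg hK.le (sub_nonneg.mpr ht₁))]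
  have key := norm_sq_le_gronwallBound_of_norm_deriv_right_le hΔ.le
    (fun s hs => (hderiv s hs.1 (hlt s hs)).continuousAt.continuousWithinAt)
    (fun s hs => (hderiv s hs.1 (hlt s (Ico_subset_Icc_self hs))).hasDerivWithinAt) hinit
    (fun s hs => hbound s hs.1 (hlt s (Ico_subset_Icc_self hs))) t ⟨ht₁, le_rfl⟩
  simp only [gronwallBound_of_K_ne_0 hK.ne', zero_mul, zero_add] at key
  rw [Real.le_sqrt (norm_nonneg _) (by positivity)]
  calc ‖X t‖ ^ 2 ≤ Δ / (2 * L + Δ) * (exp ((2 * L + Δ) * (t - t₁)) - 1) := key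
    _ ≤ 2 * Δ / (2 * L + Δ) * (exp ((2 * L + Δ) * (t - t₁)) - 1) := by gcongr; linarith

/-- Exponential-instability envelope (eq. (22)) for the open-loop prediction
error during loss of feedback: with `λ = 2L + Δ`, `δ = 2Δ/(2L + Δ)`,
`X̃(t₁) = 0` and `‖X̃̇‖ ≤ L‖X̃‖ + Δ`, one has
`‖X̃(t)‖ ≤ √(δ(e^{λ(t−t₁)} − 1))` on `[t₁, T)`. -/
theorem stmt_12 (n : ℕ) (L Δ : ℝ) (hL : 0 < L) (hΔ : 0 < Δ)
    (t₁ : ℝ) (T : EReal) (hT : (t₁ : EReal) < T)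
    (X X' : ℝ → EuclideanSpace ℝ (Fin n))
    (hinit : X t₁ = 0)
    (hderiv : ∀ t : ℝ, t₁ ≤ t → (t : EReal) < T → HasDerivAt X (X' t) t)
    (hbound : ∀ t : ℝ, t₁ ≤ t → (t : EReal) < T → ‖X' t‖ ≤ L * ‖X t‖ + Δ) :
    ∀ t : ℝ, t₁ ≤ t → (t : EReal) < T →
      ‖X t‖ ≤ Real.sqrt ((2 * Δ / (2 * L + Δ)) *
        (Real.exp ((2 * L + Δ) * (t - t₁)) - 1)) :=
  stmt_12_general n L Δ hL hΔ t₁ T X X' hinit hderiv hbound
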